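/- arXiv:2406.01161 — 7 statements merged into one kernel-verified Lean document; each statement's English description precedes it below -/
import Mathlib

section
/- Let V be a finite type, P : V → Type* a family of types such that every P v is nonempty, κ : V → ℕ a level function, and f : Π v : V, ((Π u : V, P u) → P v) a family of equations. Assume (locality): for every v : V and all x, y : Π u : V, P u, if x u = y u for every u with κ u ≤ κ v, then f v x = f v y. Assume (blockwise unique solvability): for every n : ℕ and every x : Π u : V, P u there exists exactly one y : Π u : V, P u such that y v = x v for all v with κ v ≠ n, and y v = f v y for all v with κ v = n. Then there exists exactly one x : Π u : V, P u such that x v = f v x for all v : V. -/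
/-- Deterministic fixed-point skeleton of Proposition 2.9 (unique solvability of a
system of SDEs): locality along a level function `κ` plus blockwise unique
solvability imply unique solvability of the whole system. -/
theorem blockwise_unique_solvability
    {V : Type*} [Finite V] (P : V → Type*) [∀ v, Nonempty (P v)]
    (κ : V → ℕ) (f : ∀ v : V, ((∀ u : V, P u) → P v))
    (hloc : ∀ (v : V) (x y : ∀ u : V, P u),
      (∀ u : V, κ u ≤ κ v → x u = y u) → f v x = f v y)
    (hblock : ∀ (n : ℕ) (x : ∀ u : V, P u),
      ∃! y : ∀ u : V, P u,
        (∀ v : V, κ v ≠ n → y v = x v) ∧ (∀ v : V, κ v = n → y v = f v y)) :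
    ∃! x : ∀ u : V, P u, ∀ v : V, x v = f v x := by
  classical
  -- the blockwise solution operator
  set g : ℕ → (∀ u : V, P u) → (∀ u : V, P u) := fun n x => (hblock n x).choose with hg
  have hgspec : ∀ n x, (∀ v : V, κ v ≠ n → g n x v = x v) ∧
      (∀ v : V, κ v = n → g n x v = f v (g n x)) := fun n x => (hblock n x).choose_spec.1
  -- iterate
  set a : ℕ → (∀ u : V, P u) := fun n => Nat.rec (Classical.arbitrary _) (fun k y => g k y) n
    with ha
  have hstep : ∀ n, a (n + 1) = g n (a n) := fun n => rfl
  have key : ∀ n, ∀ v : V, κ v < n → a n v = f v (a n) := by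
    intro n
    induction n with
    | zero => intro v hv; omega
    | succ n ih =>
      intro v hv
      rcases Nat.lt_succ_iff_lt_or_eq.mp hv with h | h
      · have h1 : a (n + 1) v = a n v := by
          rw [hstep]; exact (hgspec n (a n)).1 v (by omega)
        rw [h1, ih v h]
        apply hloc
        intro u hu
        rw [hstep]
        exact ((hgspec n (a n)).1 u (by omega)).symm
      · rw [hstep]; exact (hgspec n (a n)).2 v h
  obtain ⟨N, hN⟩ : ∃ N, ∀ v : V, κ v < N := by
    obtain ⟨N, hN⟩ := Finite.exists_le κ
    exact ⟨N + 1, fun v => by have := hN v; omega⟩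
  refine ⟨a N, fun v => key N v (hN v), ?_⟩
  -- uniqueness
  intro y hy
  suffices h : ∀ n, ∀ v : V, κ v = n → y v = a N v by
    funext v; exact h (κ v) v rfl
  intro n
  induction n using Nat.strong_induction_on with
  | _ n ih =>
    intro v hv
    have hx : ∀ v : V, a N v = f v (a N) := fun v => key N v (hN v)
    set z : ∀ u : V, P u := fun u => if κ u = n then y u else a N u with hz
    have hz1 : ∀ v : V, κ v ≠ n → z v = a N v := fun v h => if_neg h
    have hz2 : ∀ v : V, κ v = n → z v = f v z := by
      intro w hw
      have : z w = y w := if_pos hw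
      rw [this, hy w]
      apply hloc
      intro u hu
      by_cases hu' : κ u = n
      · exact (if_pos hu').symm
      · rw [hz1 u hu']
        exact ih (κ u) (by omega) u rfl
    have huniq := (hblock n (a N)).choose_spec.2
    have e1 : a N = (hblock n (a N)).choose :=
      huniq (a N) ⟨fun _ _ => rfl, fun w hw => hx w⟩
    have e2 : z = (hblock n (a N)).choose := huniq z ⟨hz1, hz2⟩
    have : z v = a N v := congrFun (e2.trans e1.symm) v
    rw [← this]
    exact (if_pos hv).symm
end

section
/- Let V and Q be types and P : V → Type* a family of types, and let f assign to each v : V a map f_v : (Π u : V, P u) → Q → P v. For A ⊆ V, x : Π u : V, P u and q : Q, call y : Π u : V, P u an A-solution for (x, q) if y v = x v for all v ∉ A and y v = f_v y q for all v ∈ A. Assume f is simple: for every A ⊆ V, every x : Π u : V, P u and every q : Q there exists exactly one A-solution for (x, q). Fix L ⊆ V, set O := V \ L, write sol_L(x, q) for the unique L-solution for (x, q), and define the marginal mechanism by f̃_v x q := f_v (sol_L(x, q)) q for v ∈ O. Then: (i) for every v ∈ O, if x and x′ agree on O then f̃_v x q = f̃_v x′ q; and (ii) the marginal system is simple on O: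 for every B ⊆ O, every x : Π u : V, P u and every q : Q there exists y : Π u : V, P u with y v = x v for all v ∈ O \ B and y v = f̃_v y q for all v ∈ B, and any two such y agree on O. -/
/-- Deterministic, measure-free core of Proposition 3.7: the class of simple
DSCMs is closed under marginalisation. -/
theorem simple_closed_under_marginalisation
    {V Q : Type*} (P : V → Type*)
    (f : ∀ v : V, (∀ u : V, P u) → Q → P v)
    (hsimple : ∀ (A : Set V) (x : ∀ u : V, P u) (q : Q),
      ∃! y : ∀ u : V, P u,
        (∀ v ∉ A, y v = x v) ∧ (∀ v ∈ A, y v = f v y q))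
    (L : Set V) (O : Set V) (hO : O = Lᶜ)
    (sol : (∀ u : V, P u) → Q → (∀ u : V, P u))
    (hsol : ∀ (x : ∀ u : V, P u) (q : Q),
      (∀ v ∉ L, sol x q v = x v) ∧ (∀ v ∈ L, sol x q v = f v (sol x q) q))
    (ftil : ∀ v : V, (∀ u : V, P u) → Q → P v)
    (hftil : ∀ v ∈ O, ∀ (x : ∀ u : V, P u) (q : Q), ftil v x q = f v (sol x q) q) :
    (∀ v ∈ O, ∀ (x x' : ∀ u : V, P u) (q : Q),
      (∀ u ∈ O, x u = x' u) → ftil v x q = ftil v x' q)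
    ∧ (∀ (B : Set V), B ⊆ O → ∀ (x : ∀ u : V, P u) (q : Q),
        (∃ y : ∀ u : V, P u,
          (∀ v ∈ O \ B, y v = x v) ∧ (∀ v ∈ B, y v = ftil v y q))
        ∧ ∀ (y y' : ∀ u : V, P u),
            ((∀ v ∈ O \ B, y v = x v) ∧ (∀ v ∈ B, y v = ftil v y q)) →
            ((∀ v ∈ O \ B, y' v = x v) ∧ (∀ v ∈ B, y' v = ftil v y' q)) →
            ∀ v ∈ O, y v = y' v) := by
  -- sol x q is the unique L-solution for (x,q)
  have hsolu : ∀ (x : ∀ u : V, P u) (q : Q) (z : ∀ u : V, P u),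
      ((∀ v ∉ L, z v = x v) ∧ (∀ v ∈ L, z v = f v z q)) → z = sol x q := by
    intro x q z hz
    obtain ⟨y, hy, huniq⟩ := hsimple L x q
    rw [huniq z hz, huniq (sol x q) (hsol x q)]
  -- if x, x' agree off L, then sol x q = sol x' q
  have hkey : ∀ (x x' : ∀ u : V, P u) (q : Q),
      (∀ u ∈ O, x u = x' u) → sol x q = sol x' q := by
    intro x x' q hxx'
    apply hsolu x' q
    refine ⟨fun v hv => ?_, (hsol x q).2⟩
    rw [(hsol x q).1 v hv, hxx' v (by rw [hO]; exact hv)]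
  -- sol y q = y when y already solves L
  have hfix : ∀ (y : ∀ u : V, P u) (q : Q),
      (∀ v ∈ L, y v = f v y q) → sol y q = y := by
    intro y q h
    exact (hsolu y q y ⟨fun v _ => rfl, h⟩).symm
  constructor
  · intro v hv x x' q hxx'
    rw [hftil v hv x q, hftil v hv x' q, hkey x x' q hxx']
  · intro B hB x q
    obtain ⟨y0, ⟨hy01, hy02⟩, huniq⟩ := hsimple (B ∪ L) x q
    have hy0L : sol y0 q = y0 := hfix y0 q (fun v hv => hy02 v (Or.inr hv))
    constructor
    · refine ⟨y0, fun v hv => ?_, fun v hv => ?_⟩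
      · apply hy01
        rintro (h | h)
        · exact hv.2 h
        · rw [hO] at hv; exact hv.1 h
      · rw [hftil v (hB hv) y0 q, hy0L]
        exact hy02 v (Or.inl hv)
    · intro y y' ⟨hy1, hy2⟩ ⟨hy1', hy2'⟩ v hv
      -- sol y q and sol y' q are both (B ∪ L)-solutions for (x,q)
      have main : ∀ (z : ∀ u : V, P u),
          ((∀ v ∈ O \ B, z v = x v) ∧ (∀ v ∈ B, z v = ftil v z q)) →
          (∀ v ∉ B ∪ L, sol z q v = x v) ∧
          (∀ v ∈ B ∪ L, sol z q v = f v (sol z q) q) := by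
        intro z ⟨hz1, hz2⟩
        constructor
        · intro w hw
          simp only [Set.mem_union, not_or] at hw
          have hwL : w ∉ L := hw.2
          rw [(hsol z q).1 w hwL]
          exact hz1 w ⟨by rw [hO]; exact hwL, hw.1⟩
        · rintro w (hw | hw)
          · rw [(hsol z q).1 w (by rw [hO] at hB; exact hB hw)]
            rw [hz2 w hw, hftil w (hB hw) z q]
          · exact (hsol z q).2 w hw
      obtain ⟨y1, _, huniq1⟩ := hsimple (B ∪ L) x q
      have e1 := huniq1 (sol y q) (main y ⟨hy1, hy2⟩)
      have e2 := huniq1 (sol y' q) (main y' ⟨hy1', hy2'⟩)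
      have hvL : v ∉ L := by rw [hO] at hv; exact hv
      calc y v = sol y q v := ((hsol y q).1 v hvL).symm
        _ = sol y' q v := by rw [e1, e2]
        _ = y' v := (hsol y' q).1 v hvL
end

section
/- Let T be a linearly ordered set, let I, J, K be index sets and (E_i)_{i∈I}, (F_j)_{j∈J}, (G_k)_{k∈K} families of types; write 𝒜 := Π i : I, (T → E_i), ℬ := Π j : J, (T → F_j), 𝒞 := Π k : K, (T → G_k). For a ∈ 𝒜 and t ∈ T, the truncation a^t is defined componentwise by (a^t) i s := a i (min(s, t)), and likewise on ℬ, 𝒞 and on products; a map h between such products of path spaces is adapted if h(u)^t = h(u^t)^t for all inputs u and all t ∈ T. If f : 𝒜 × ℬ × 𝒞 → 𝒜 and g : 𝒜 × 𝒞 → ℬ are adapted, then the map h : 𝒜 × 𝒞 → 𝒜 defined by h(a, c) := f(a, g(a, c), c) is adapted. -/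
/-- Componentwise truncation (stopping) of a family of paths at time `t`:
`(a^t) i s := a i (min s t)`. -/
def pathTrunc {T : Type*} [LinearOrder T] {I : Type*} {E : I → Type*}
    (a : ∀ i : I, T → E i) (t : T) : ∀ i : I, T → E i :=
  fun i s => a i (min s t)

lemma pathTrunc_idem {T : Type*} [LinearOrder T] {I : Type*} {E : I → Type*}
    (a : ∀ i : I, T → E i) (t : T) : pathTrunc (pathTrunc a t) t = pathTrunc a t := by
  funext i s
  simp [pathTrunc, min_assoc]

/-- The adaptedness computation in the proof of Proposition 3.7: the marginal
causal mechanism `h(a, c) := f(a, g(a, c), c)` of adapted `f` and `g` is adapted. -/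
theorem marginal_mechanism_adapted
    {T : Type*} [LinearOrder T] {I J K : Type*}
    (E : I → Type*) (F : J → Type*) (G : K → Type*)
    (f : (∀ i : I, T → E i) × (∀ j : J, T → F j) × (∀ k : K, T → G k) → (∀ i : I, T → E i))
    (g : (∀ i : I, T → E i) × (∀ k : K, T → G k) → (∀ j : J, T → F j))
    (hf : ∀ (a : ∀ i : I, T → E i) (b : ∀ j : J, T → F j) (c : ∀ k : K, T → G k) (t : T),
      pathTrunc (f (a, b, c)) t
        = pathTrunc (f (pathTrunc a t, pathTrunc b t, pathTrunc c t)) t)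
    (hg : ∀ (a : ∀ i : I, T → E i) (c : ∀ k : K, T → G k) (t : T),
      pathTrunc (g (a, c)) t = pathTrunc (g (pathTrunc a t, pathTrunc c t)) t) :
    ∀ (a : ∀ i : I, T → E i) (c : ∀ k : K, T → G k) (t : T),
      pathTrunc (f (a, g (a, c), c)) t
        = pathTrunc (f (pathTrunc a t, g (pathTrunc a t, pathTrunc c t), pathTrunc c t)) t := by
  intro a c t
  rw [hf a (g (a, c)) c t, hg a c t,
    hf (pathTrunc a t) (g (pathTrunc a t, pathTrunc c t)) (pathTrunc c t) t,
    pathTrunc_idem, pathTrunc_idem]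
end

section
/- Let I and J be index sets and (α_i)_{i∈I}, (β_j)_{j∈J} families of nonempty types; write 𝒳 := Π i : I, (ℕ → α_i) and 𝒲 := Π j : J, (ℕ → β_j). Let f : 𝒳 × 𝒲 → 𝒳 satisfy: (strictly delayed endogenous dependence) for all x, x′ ∈ 𝒳, w ∈ 𝒲 and t ∈ ℕ, if x i s = x′ i s for all i ∈ I and all s < t, then f(x, w) i s = f(x′, w) i s for all i ∈ I and all s ≤ t; and (adapted exogenous dependence) for all x ∈ 𝒳, w, w′ ∈ 𝒲 and t ∈ ℕ, if w j s = w′ j s for all j ∈ J and all s ≤ t, then f(x, w) i s = f(x, w′) i s for all i ∈ I and all s ≤ t. Then for every w ∈ 𝒲 there exists exactly one x ∈ 𝒳 with x = f(x, w), and the resulting solution map g : 𝒲 → 𝒳 is adapted: whenever w j s = w′ j s for all j ∈ J and all s ≤ t, also g(w) i s = g(w′) i s for all i ∈ I and all s ≤ t. -/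
/-- Discrete-time unique solvability and adaptedness of the solution map: if the
causal mechanism has strictly delayed dependence on the endogenous paths and
adapted dependence on the exogenous paths, then for every exogenous path there
is a unique solution, and any solution map is adapted. -/
theorem discrete_time_unique_solution_adapted
    {I J : Type*} (α : I → Type*) (β : J → Type*)
    [∀ i, Nonempty (α i)] [∀ j, Nonempty (β j)]
    (f : (∀ i : I, ℕ → α i) × (∀ j : J, ℕ → β j) → (∀ i : I, ℕ → α i))
    (hdelay : ∀ (x x' : ∀ i : I, ℕ → α i) (w : ∀ j : J, ℕ → β j) (t : ℕ),
      (∀ (i : I) (s : ℕ), s < t → x i s = x' i s) →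
      ∀ (i : I) (s : ℕ), s ≤ t → f (x, w) i s = f (x', w) i s)
    (hadapt : ∀ (x : ∀ i : I, ℕ → α i) (w w' : ∀ j : J, ℕ → β j) (t : ℕ),
      (∀ (j : J) (s : ℕ), s ≤ t → w j s = w' j s) →
      ∀ (i : I) (s : ℕ), s ≤ t → f (x, w) i s = f (x, w') i s) :
    (∀ w : ∀ j : J, ℕ → β j, ∃! x : ∀ i : I, ℕ → α i, x = f (x, w))
    ∧ ∀ g : (∀ j : J, ℕ → β j) → (∀ i : I, ℕ → α i),
        (∀ w, g w = f (g w, w)) →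
        ∀ (w w' : ∀ j : J, ℕ → β j) (t : ℕ),
          (∀ (j : J) (s : ℕ), s ≤ t → w j s = w' j s) →
          ∀ (i : I) (s : ℕ), s ≤ t → g w i s = g w' i s := by
  -- uniqueness of fixed points (for a common w): strong induction on time
  have huniq : ∀ (w : ∀ j : J, ℕ → β j) (x x' : ∀ i : I, ℕ → α i),
      x = f (x, w) → x' = f (x', w) → x = x' := by
    intro w x x' hx hx'
    have key : ∀ s : ℕ, ∀ i : I, x i s = x' i s := by
      intro s
      induction s using Nat.strong_induction_on with
      | _ s ih =>
        intro i
        rw [hx, hx']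
        exact hdelay x x' w s (fun i' s' hs' => ih s' hs' i') i s le_rfl
    funext i s; exact key s i
  constructor
  · intro w
    -- successive approximations
    let seq : ℕ → ∀ i : I, ℕ → α i := fun n =>
      Nat.rec (Classical.arbitrary _) (fun _ xn => f (xn, w)) n
    have hseq_succ : ∀ n, seq (n + 1) = f (seq n, w) := fun n => rfl
    have hstep : ∀ n, ∀ (i : I) (s : ℕ), s < n → seq n i s = seq (n + 1) i s := by
      intro n
      induction n with
      | zero => intro i s hs; omega
      | succ n ih =>
        intro i s hs
        exact hdelay (seq n) (seq (n + 1)) w n ih i s (by omega)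
    have hmono : ∀ n m, n ≤ m → ∀ (i : I) (s : ℕ), s < n → seq n i s = seq m i s := by
      intro n m hnm
      induction m, hnm using Nat.le_induction with
      | base => intro i s _; rfl
      | succ m hm ih =>
        intro i s hs
        rw [ih i s hs]
        exact hstep m i s (by omega)
    set x : ∀ i : I, ℕ → α i := fun i s => seq (s + 1) i s with hxdef
    have hx : x = f (x, w) := by
      funext i s
      have hagree : ∀ (i' : I) (s' : ℕ), s' < s → x i' s' = seq s i' s' := by
        intro i' s' hs'
        exact (hmono (s' + 1) s (by omega) i' s' (by omega)).symm ▸ rfl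
      have := hdelay x (seq s) w s hagree i s le_rfl
      calc x i s = seq (s + 1) i s := rfl
        _ = f (seq s, w) i s := by rw [hseq_succ]
        _ = f (x, w) i s := (this.symm)
    exact ⟨x, hx, fun y hy => huniq w y x hy hx⟩
  · intro g hg w w' t hw
    have key : ∀ s, s ≤ t → ∀ i, g w i s = g w' i s := by
      intro s
      induction s using Nat.strong_induction_on with
      | _ s ih =>
        intro hs i
        rw [hg w, hg w']
        calc f (g w, w) i s = f (g w, w') i s := hadapt (g w) w w' t hw i s hs
          _ = f (g w', w') i s := by
              refine hdelay (g w) (g w') w' s ?_ i s le_rfl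
              intro i' s' hs'
              exact ih s' hs' (by omega) i'
    exact fun i s hs => key s hs i
end

section
/- Let T be a linearly ordered set, (α, 𝒜), (β, ℬ), (γ, 𝒢) measurable spaces, and equip the path spaces T → α, T → β, T → γ with their product σ-algebras (the smallest σ-algebras making every evaluation map x ↦ x(s), s ∈ T, measurable). Let g : (T → α) × (T → β) → (T → γ) be measurable (with respect to the product of the two path σ-algebras) and jointly adapted: for all x : T → α, w : T → β, all t ∈ T and all s ≤ t, g(x, w)(s) = g(x^t, w^t)(s), where x^t(u) := x(min(u, t)). Then for every t ∈ T, the map (x, w) ↦ g(x, w)(t) is measurable from (T → α) × (T → β), equipped with the canonical past σ-algebra ⨆_{s ≤ t} (comap((x, w) ↦ x(s)) ⊔ comap((x, w) ↦ w(s))), to (γ, 𝒢). -/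
/-- Proposition A.3: a measurable, jointly adapted map `g` on a product of path
spaces has, for each time `t`, a time-`t` evaluation that is measurable with
respect to the canonical past σ-algebra at time `t`. -/
theorem adapted_solution_measurable_canonical_filtration
    {T : Type*} [LinearOrder T] {α β γ : Type*}
    [mα : MeasurableSpace α] [mβ : MeasurableSpace β] [mγ : MeasurableSpace γ]
    (g : (T → α) × (T → β) → (T → γ))
    (hg : Measurable g)
    (hadapt : ∀ (x : T → α) (w : T → β) (t : T), ∀ s ≤ t,
      g (x, w) s = g (fun u => x (min u t), fun u => w (min u t)) s)
    (t : T) :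
    @Measurable ((T → α) × (T → β)) γ
      (⨆ s ∈ {s : T | s ≤ t},
        MeasurableSpace.comap (fun p : (T → α) × (T → β) => p.1 s) mα ⊔
          MeasurableSpace.comap (fun p : (T → α) × (T → β) => p.2 s) mβ)
      mγ
      (fun p => g p t) := by
  set M : MeasurableSpace ((T → α) × (T → β)) :=
    ⨆ s ∈ {s : T | s ≤ t},
      MeasurableSpace.comap (fun p : (T → α) × (T → β) => p.1 s) mα ⊔
        MeasurableSpace.comap (fun p : (T → α) × (T → β) => p.2 s) mβ with hM
  have hφ : @Measurable ((T → α) × (T → β)) ((T → α) × (T → β)) M Prod.instMeasurableSpace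
      (fun p : (T → α) × (T → β) =>
        ((fun u => p.1 (min u t), fun u => p.2 (min u t)) : (T → α) × (T → β))) := by
    apply Measurable.prod
    · apply measurable_pi_lambda
      intro u
      have hle : MeasurableSpace.comap (fun p : (T → α) × (T → β) => p.1 (min u t)) mα ≤ M := by
        rw [hM]
        exact le_iSup_of_le (min u t) (le_iSup_of_le (min_le_right u t) le_sup_left)
      exact Measurable.of_comap_le hle
    · apply measurable_pi_lambda
      intro u
      have hle : MeasurableSpace.comap (fun p : (T → α) × (T → β) => p.2 (min u t)) mβ ≤ M := by
        rw [hM]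
        exact le_iSup_of_le (min u t) (le_iSup_of_le (min_le_right u t) le_sup_right)
      exact Measurable.of_comap_le hle
  have key : (fun p : (T → α) × (T → β) => g p t) =
      (fun p : (T → α) × (T → β) =>
        g (fun u => p.1 (min u t), fun u => p.2 (min u t)) t) := by
    funext p
    exact hadapt p.1 p.2 t t le_rfl
  rw [key]
  exact ((measurable_pi_apply t).comp hg).comp hφ
end

section
/- Let T be a linearly ordered set, (α, 𝒜) and (β, ℬ) measurable spaces, and equip the path spaces T → α and T → β with their product σ-algebras (the smallest σ-algebras making every evaluation map x ↦ x(s), s ∈ T, measurable). Let g : (T → α) → (T → β) be measurable and adapted: for all x : T → α, all t ∈ T and all s ≤ t, g(x)(s) = g(x^t)(s), where x^t(u) := x(min(u, t)). Then for every set Ω, every map X : Ω → (T → α) and every t ∈ T, the map ω ↦ g(X(ω))(t) is measurable from (Ω, F_t^X) to (β, ℬ), where F_t^X := ⨆_{s ≤ t} comap(ω ↦ X(ω)(s)) is the past σ-algebra of X at time t. -/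
/-- Adapted case of Lemma A.2: for a process `X` and `Y := g(X)` with `g`
measurable and adapted, `Y(t)` is measurable with respect to the past
σ-algebra `F_t^X` generated by the evaluations of `X` at times `s ≤ t`. -/
theorem adapted_map_measurable_past
    {T : Type*} [LinearOrder T] {α β : Type*}
    [mα : MeasurableSpace α] [mβ : MeasurableSpace β]
    (g : (T → α) → (T → β))
    (hg : Measurable g)
    (hadapt : ∀ (x : T → α) (t : T), ∀ s ≤ t, g x s = g (fun u => x (min u t)) s)
    {Ω : Type*} (X : Ω → (T → α)) (t : T) :
    @Measurable Ω β
      (⨆ s ∈ {s : T | s ≤ t}, MeasurableSpace.comap (fun ω => X ω s) mα)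
      mβ
      (fun ω => g (X ω) t) := by
  set F : MeasurableSpace Ω :=
    ⨆ s ∈ {s : T | s ≤ t}, MeasurableSpace.comap (fun ω => X ω s) mα with hF
  have h1 : @Measurable Ω (T → α) F _ (fun ω u => X ω (min u t)) := by
    apply measurable_pi_lambda
    intro u
    have hle : MeasurableSpace.comap (fun ω => X ω (min u t)) mα ≤ F := by
      rw [hF]
      exact le_biSup (fun s => MeasurableSpace.comap (fun ω => X ω s) mα) (min_le_right u t)
    exact Measurable.of_comap_le hle
  have h2 : @Measurable Ω β F _ (fun ω => g (fun u => X ω (min u t)) t) :=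
    (measurable_pi_apply t).comp (hg.comp h1)
  have : (fun ω => g (X ω) t) = fun ω => g (fun u => X ω (min u t)) t := by
    funext ω
    exact hadapt (X ω) t t le_rfl
  rw [this]
  exact h2
end

section
/- Let T be a linearly ordered set, (α, 𝒜) and (β, ℬ) measurable spaces with α nonempty, and equip the path spaces T → α and T → β with their product σ-algebras (the smallest σ-algebras making every evaluation map x ↦ x(s), s ∈ T, measurable). Let g : (T → α) → (T → β) be measurable and have strict-past (predictable) dependence: for all x, y : T → α and all t ∈ T, if x(s) = y(s) for all s < t, then g(x)(s) = g(y)(s) for all s ≤ t. Then for every set Ω, every map X : Ω → (T → α) and every t ∈ T, the map ω ↦ g(X(ω))(t) is measurable from (Ω, F_{t−}^X) to (β, ℬ), where F_{t−}^X := ⨆_{s < t} comap(ω ↦ X(ω)(s)) is the strict past σ-algebra of X at time t. -/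
/-- Predictable case of Lemma A.2: for a process `X` and `Y := g(X)` with `g`
measurable and with strict-past (predictable) dependence, `Y(t)` is measurable
with respect to the strict past σ-algebra `F_{t-}^X` generated by the
evaluations of `X` at times `s < t`. -/
theorem predictable_map_measurable_strict_past
    {T : Type*} [LinearOrder T] {α β : Type*}
    [mα : MeasurableSpace α] [mβ : MeasurableSpace β] [Nonempty α]
    (g : (T → α) → (T → β))
    (hg : Measurable g)
    (hpred : ∀ (x y : T → α) (t : T),
      (∀ s < t, x s = y s) → ∀ s ≤ t, g x s = g y s)
    {Ω : Type*} (X : Ω → (T → α)) (t : T) :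
    @Measurable Ω β
      (⨆ s ∈ {s : T | s < t}, MeasurableSpace.comap (fun ω => X ω s) mα)
      mβ
      (fun ω => g (X ω) t) := by
  obtain ⟨c⟩ : Nonempty α := inferInstance
  set m : MeasurableSpace Ω :=
    ⨆ s ∈ {s : T | s < t}, MeasurableSpace.comap (fun ω => X ω s) mα with hm
  -- truncation
  have key : (fun ω => g (X ω) t)
      = fun ω => g (fun s => if s < t then X ω s else c) t := by
    funext ω
    exact hpred _ _ t (fun s hs => (if_pos hs).symm) t le_rfl
  rw [key]
  have hτ : @Measurable Ω (T → α) m _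
      (fun ω => (fun s => if s < t then X ω s else c)) := by
    rw [measurable_pi_iff]
    intro s
    by_cases hs : s < t
    · simp only [if_pos hs]
      have hle : MeasurableSpace.comap (fun ω => X ω s) mα ≤ m :=
        le_iSup₂ (f := fun s (_ : s ∈ {s : T | s < t}) =>
          MeasurableSpace.comap (fun ω => X ω s) mα) s hs
      exact fun u hu => hle _ ⟨u, hu, rfl⟩
    · simp only [if_neg hs]
      exact measurable_const
  exact ((measurable_pi_apply t).comp hg).comp hτ
end
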